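/- arXiv:2510.17071 — 2 statements merged into one kernel-verified Lean document; each statement's English description precedes it below -/
import Mathlib

section
/- Let n ≥ 1 and let 𝒜ₙ be the complete-graph incidence matrix with self-loops. For any branch weights y : ℰ → ℂ and shunt weights y^sh : Fin n → ℂ, assembled into the stacked weight vector w on ℰ ⊕ Fin n, the matrix Y := 𝒜ₙᵀ · diag(w) · 𝒜ₙ is the standard bus admittance matrix: its diagonal entries are Y_{kk} = y^sh_k + Σ_{(i,j) ∈ ℰ, k ∈ {i,j}} y_{(i,j)}, and for k ≠ l its off-diagonal entries are Y_{kl} = −y_{(min(k,l), max(k,l))}. -/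
open Matrix

/-- The branches of the complete graph on `n` nodes: ordered pairs `(i, j)` with `i < j`. -/
abbrev Branch (n : ℕ) := {p : Fin n × Fin n // p.1 < p.2}

/-- The complete-graph incidence matrix with self-loops `𝒜ₙ`: the row of branch `(i, j)` has
entry `1` in column `i`, `-1` in column `j`, and `0` elsewhere; the row of node `k` has entry
`1` in column `k` and `0` elsewhere. -/
def completeIncidence (n : ℕ) : Matrix (Branch n ⊕ Fin n) (Fin n) ℂ :=
  Matrix.of fun r c =>
    match r with
    | Sum.inl e => if c = e.val.1 then 1 else if c = e.val.2 then -1 else 0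
    | Sum.inr k => if c = k then 1 else 0
/-! Entry `(k, l)` of `Aᵀ * diagonal w * A` is `∑ r, w r * A r k * A r l`. A node row of `𝒜ₙ`
contributes only to the diagonal, with weight `ysh k`. A branch row `(i, j)` has entries in
`{1, -1}` at `i` and `j` only, so on the diagonal it contributes `y (i, j)` exactly when
`k ∈ {i, j}`, and off the diagonal it contributes `-y (i, j)` exactly when `{k, l} = {i, j}`. -/

theorem Matrix.transpose_mul_diagonal_mul_apply {m n R : Type*} [Fintype m] [DecidableEq m]
    [CommSemiring R] (A : Matrix m n R) (w : m → R) (k l : n) :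
    (Aᵀ * diagonal w * A) k l = ∑ r, w r * (A r k * A r l) := by
  rw [mul_apply]
  simp only [mul_diagonal, transpose_apply]
  exact Finset.sum_congr rfl fun r _ => by ring

section completeIncidence

variable {n : ℕ}

theorem completeIncidence_inl_mul_self (e : Branch n) (k : Fin n) :
    completeIncidence n (.inl e) k * completeIncidence n (.inl e) k =
      if k = e.val.1 ∨ k = e.val.2 then 1 else 0 := by
  simp only [completeIncidence, of_apply]
  split_ifs <;> simp_all

theorem completeIncidence_inl_mul_of_ne {k l : Fin n} (h : k ≠ l) (e : Branch n) :
    completeIncidence n (.inl e) k * completeIncidence n (.inl e) l =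
      if e = ⟨(min k l, max k l), min_lt_max.mpr h⟩ then -1 else 0 := by
  obtain ⟨⟨i, j⟩, hij⟩ := e
  simp only [completeIncidence, of_apply, Subtype.mk.injEq, Prod.mk.injEq]
  rcases lt_or_gt_of_ne h with hkl | hlk
  · simp only [min_eq_left hkl.le, max_eq_right hkl.le]
    split_ifs <;> grind
  · simp only [min_eq_right hlk.le, max_eq_left hlk.le]
    split_ifs <;> grind

theorem sum_mul_completeIncidence_inr_mul (v : Fin n → ℂ) (k l : Fin n) :
    ∑ m, v m * (completeIncidence n (.inr m) k * completeIncidence n (.inr m) l) =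
      if k = l then v k else 0 := by
  by_cases h : k = l <;> simp [completeIncidence, h]

theorem completeIncidence_transpose_mul_diagonal_mul_apply (y : Branch n → ℂ) (ysh : Fin n → ℂ)
    (k l : Fin n) :
    ((completeIncidence n)ᵀ * diagonal (Sum.elim y ysh) * completeIncidence n) k l =
      (∑ e, y e * (completeIncidence n (.inl e) k * completeIncidence n (.inl e) l)) +
        if k = l then ysh k else 0 := by
  rw [transpose_mul_diagonal_mul_apply, Fintype.sum_sum_type]
  simp only [Sum.elim_inl, Sum.elim_inr, sum_mul_completeIncidence_inr_mul]

end completeIncidence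

theorem admittance_matrix_entries_general (n : ℕ)
    (y : Branch n → ℂ) (ysh : Fin n → ℂ) (Y : Matrix (Fin n) (Fin n) ℂ)
    (hY : Y = (completeIncidence n)ᵀ * Matrix.diagonal (Sum.elim y ysh) * completeIncidence n) :
    (∀ k : Fin n,
      Y k k = ysh k + ∑ e : Branch n, (if k = e.val.1 ∨ k = e.val.2 then y e else 0)) ∧
    (∀ k l : Fin n, ∀ h : k ≠ l,
      Y k l = - y ⟨(min k l, max k l), min_lt_max.mpr h⟩) := by
  subst hY
  refine ⟨fun k => ?_, fun k l h => ?_⟩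
  · simp only [completeIncidence_transpose_mul_diagonal_mul_apply,
      completeIncidence_inl_mul_self, mul_ite, mul_one, mul_zero, if_true]
    exact add_comm _ _
  · simp only [completeIncidence_transpose_mul_diagonal_mul_apply,
      completeIncidence_inl_mul_of_ne h, mul_ite, mul_neg, mul_one, mul_zero,
      Finset.sum_ite_eq', Finset.mem_univ, if_true, if_neg h, add_zero]

/-- For branch weights `y` and shunt weights `ysh`, the matrix
`Y = 𝒜ₙᵀ ⬝ diag (Sum.elim y ysh) ⬝ 𝒜ₙ` is the standard bus admittance matrix:
`Y k k = ysh k + ∑_{(i,j) ∈ ℰ, k ∈ {i,j}} y (i,j)`, and for `k ≠ l`,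
`Y k l = - y (min k l, max k l)`. -/
theorem admittance_matrix_entries (n : ℕ) (hn : 1 ≤ n)
    (y : Branch n → ℂ) (ysh : Fin n → ℂ) (Y : Matrix (Fin n) (Fin n) ℂ)
    (hY : Y = (completeIncidence n)ᵀ * Matrix.diagonal (Sum.elim y ysh) * completeIncidence n) :
    (∀ k : Fin n,
      Y k k = ysh k + ∑ e : Branch n, (if k = e.val.1 ∨ k = e.val.2 then y e else 0)) ∧
    (∀ k l : Fin n, ∀ h : k ≠ l,
      Y k l = - y ⟨(min k l, max k l), min_lt_max.mpr h⟩) :=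
  admittance_matrix_entries_general n y ysh Y hY
end

section
/- (Differentiability of power flow solutions with respect to admittance parameters.) Suppose the admittance-parameterized power flow residual satisfies κ((v_𝒫⁰, δ⁰), (g⁰, b⁰)) = 0, and suppose the partial Fréchet derivative of κ with respect to the state variables (v_𝒫, δ) at ((v_𝒫⁰, δ⁰), (g⁰, b⁰)) — the power flow Jacobian J — is a continuous linear equivalence from (𝒫 → ℝ) × (Fin n → ℝ) onto (Fin n → ℝ) × (𝒫 → ℝ). Then there exist an open neighborhood U of (g⁰, b⁰) and a map σ : (Fin k → ℝ) × (Fin k → ℝ) → (𝒫 → ℝ) × (Fin n → ℝ), continuously differentiable on U, such that: (i) σ(g⁰, b⁰) = (v_𝒫⁰, δ⁰); (ii) κ(σ(g, b), (g, b)) = 0 for all (g, b) ∈ U; and (iii) the Fréchet derivative of σ at (g⁰, b⁰) equals −J⁻¹ composed with the partial Fréchet derivative of κ with respect to the parameters (g, b) at ((v_𝒫⁰, δ⁰), (g⁰, b⁰)). -/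
/-!
The residual `κ` is built from `exp`, complex conjugation, real and imaginary parts and finite
sums of products, so it is smooth jointly in the state `s = (v_𝒫, δ)` and the parameters
`w = (g, b)`. Invertibility of the power flow Jacobian `J = ∂κ/∂s` is then exactly the hypothesis
of the implicit function theorem, which produces the `C¹` solution map `σ`; differentiating
`κ (σ w, w) = 0` at `w₀` by the chain rule gives `J ∘ Dσ + ∂κ/∂w = 0`.
-/

open Matrix

noncomputable def busVoltage (n : ℕ) (P : Finset (Fin n)) (V : Fin n → ℝ)
    (s : (↥P → ℝ) × (Fin n → ℝ)) : Fin n → ℂ :=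
  fun i => (if h : i ∈ P then ((s.1 ⟨i, h⟩ : ℝ) : ℂ) else ((V i : ℝ) : ℂ)) *
    Complex.exp (Complex.I * (s.2 i : ℂ))

noncomputable def Fmat {n k : ℕ} (A : Matrix (Fin k) (Fin n) ℂ) (x : Fin n → ℂ) :
    Matrix (Fin n) (Fin k) ℂ :=
  Matrix.diagonal (fun i => (starRingEnd ℂ) (x i)) * Aᵀ * Matrix.diagonal (A *ᵥ x)

noncomputable def kappa (n k : ℕ) (P : Finset (Fin n)) (V : Fin n → ℝ)
    (A : Matrix (Fin k) (Fin n) ℂ) (p0 : Fin n → ℝ) (q0 : ↥P → ℝ)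
    (s : (↥P → ℝ) × (Fin n → ℝ)) (gb : (Fin k → ℝ) × (Fin k → ℝ)) :
    (Fin n → ℝ) × (↥P → ℝ) :=
  ( fun i => ((Fmat A (busVoltage n P V s) *ᵥ
        fun e => ((gb.1 e : ℝ) : ℂ) + Complex.I * ((gb.2 e : ℝ) : ℂ)) i).re - p0 i,
    fun i => ((Fmat A (busVoltage n P V s) *ᵥ
        fun e => ((gb.1 e : ℝ) : ℂ) + Complex.I * ((gb.2 e : ℝ) : ℂ)) (i : Fin n)).im + q0 i )

section PartialDerivatives

variable {𝕜 : Type*} [NontriviallyNormedField 𝕜]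
  {E : Type*} [NormedAddCommGroup E] [NormedSpace 𝕜 E]
  {F : Type*} [NormedAddCommGroup F] [NormedSpace 𝕜 F]
  {G : Type*} [NormedAddCommGroup G] [NormedSpace 𝕜 G]
  {f : E × F → G} {x : E} {y : F}

theorem DifferentiableAt.fderiv_comp_prodMk_left (hf : DifferentiableAt 𝕜 f (x, y)) :
    fderiv 𝕜 (fun x => f (x, y)) x = fderiv 𝕜 f (x, y) ∘L .inl 𝕜 E F :=
  (hf.hasFDerivAt.comp x (hasFDerivAt_prodMk_left x y)).fderiv

theorem DifferentiableAt.fderiv_comp_prodMk_right (hf : DifferentiableAt 𝕜 f (x, y)) :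
    fderiv 𝕜 (fun y => f (x, y)) y = fderiv 𝕜 f (x, y) ∘L .inr 𝕜 E F :=
  (hf.hasFDerivAt.comp y (hasFDerivAt_prodMk_right x y)).fderiv

end PartialDerivatives

section ImplicitFunction

variable {𝕜 : Type*} [RCLike 𝕜]
  {E : Type*} [NormedAddCommGroup E] [NormedSpace 𝕜 E] [CompleteSpace E]
  {F : Type*} [NormedAddCommGroup F] [NormedSpace 𝕜 F] [CompleteSpace F]
  {W : Type*} [NormedAddCommGroup W] [NormedSpace 𝕜 W] [CompleteSpace W]

theorem ContDiffAt.exists_implicitFunction_fst {f : E × W → F} {s₀ : E} {w₀ : W}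
    (hf : ContDiffAt 𝕜 1 f (s₀, w₀)) (J : E ≃L[𝕜] F)
    (hJ : fderiv 𝕜 (fun s => f (s, w₀)) s₀ = J) :
    ∃ U : Set W, IsOpen U ∧ w₀ ∈ U ∧ ∃ σ : W → E,
      ContDiffOn 𝕜 1 σ U ∧ σ w₀ = s₀ ∧ (∀ w ∈ U, f (σ w, w) = f (s₀, w₀)) ∧
      fderiv 𝕜 σ w₀ = -((J.symm : F →L[𝕜] E) ∘L fderiv 𝕜 (fun w => f (s₀, w)) w₀) := by
  -- Mathlib's `ContDiffAt.implicitFunction` solves for the second factor, so swap the factors.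
  set g : W × E → F := fun p => f (p.2, p.1)
  have hg : ContDiffAt 𝕜 1 g (w₀, s₀) := hf.comp (w₀, s₀) (contDiffAt_snd.prodMk contDiffAt_fst)
  have hgd : DifferentiableAt 𝕜 g (w₀, s₀) := hg.differentiableAt one_ne_zero
  have hinr : fderiv 𝕜 g (w₀, s₀) ∘L .inr 𝕜 W E = J := hJ ▸ hgd.fderiv_comp_prodMk_right.symm
  have hinl : fderiv 𝕜 g (w₀, s₀) ∘L .inl 𝕜 W E = fderiv 𝕜 (fun w => f (s₀, w)) w₀ :=
    hgd.fderiv_comp_prodMk_left.symm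
  have hinv : (fderiv 𝕜 g (w₀, s₀) ∘L .inr 𝕜 W E).IsInvertible :=
    hinr ▸ ContinuousLinearMap.isInvertible_equiv
  obtain ⟨U₁, hU₁, hσU₁⟩ :=
    (hg.contDiffAt_implicitFunction one_ne_zero hinv).contDiffOn le_rfl (by simp)
  obtain ⟨U, hUsub, hU, hw₀⟩ := mem_nhds_iff.1
    (Filter.inter_mem hU₁ (hg.eventually_apply_implicitFunction one_ne_zero hinv))
  refine ⟨U, hU, hw₀, hg.implicitFunction one_ne_zero hinv, hσU₁.mono fun w hw => (hUsub hw).1,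
    hg.implicitFunction_apply_self one_ne_zero hinv, fun w hw => (hUsub hw).2, ?_⟩
  rw [(hg.hasStrictFDerivAt_implicitFunction one_ne_zero hinv).hasFDerivAt.fderiv, hinr, hinl,
    ContinuousLinearMap.inverse_equiv]

end ImplicitFunction

section Smoothness

variable {m : WithTop ℕ∞}

namespace Complex

@[fun_prop] theorem contDiff_ofReal : ContDiff ℝ m ((↑) : ℝ → ℂ) := ofRealCLM.contDiff

@[fun_prop] theorem contDiff_conj : ContDiff ℝ m (starRingEnd ℂ) := conjCLE.contDiff

@[fun_prop] theorem contDiff_re : ContDiff ℝ m re := reCLM.contDiff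

@[fun_prop] theorem contDiff_im : ContDiff ℝ m im := imCLM.contDiff

end Complex

theorem contDiff_busVoltage (n : ℕ) (P : Finset (Fin n)) (V : Fin n → ℝ) :
    ContDiff ℝ m (busVoltage n P V) := by
  refine contDiff_pi.2 fun i => ?_
  unfold busVoltage
  split_ifs <;> fun_prop

theorem Fmat_mulVec_apply {n k : ℕ} (A : Matrix (Fin k) (Fin n) ℂ) (x : Fin n → ℂ)
    (y : Fin k → ℂ) (i : Fin n) :
    (Fmat A x *ᵥ y) i = ∑ e, (starRingEnd ℂ) (x i) * A e i * (A *ᵥ x) e * y e := by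
  simp [Fmat, mulVec, dotProduct, mul_diagonal, diagonal_mul, mul_assoc]

theorem contDiff_Fmat_mulVec {n k : ℕ} (A : Matrix (Fin k) (Fin n) ℂ) :
    ContDiff ℝ m (fun p : (Fin n → ℂ) × (Fin k → ℂ) => Fmat A p.1 *ᵥ p.2) := by
  refine contDiff_pi.2 fun i => ?_
  simp_rw [Fmat_mulVec_apply, mulVec, dotProduct]
  fun_prop

theorem contDiff_kappa (n k : ℕ) (P : Finset (Fin n)) (V : Fin n → ℝ)
    (A : Matrix (Fin k) (Fin n) ℂ) (p0 : Fin n → ℝ) (q0 : ↥P → ℝ) :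
    ContDiff ℝ m (fun p : ((↥P → ℝ) × (Fin n → ℝ)) × ((Fin k → ℝ) × (Fin k → ℝ)) =>
      kappa n k P V A p0 q0 p.1 p.2) := by
  have hx : ContDiff ℝ m fun p : ((↥P → ℝ) × (Fin n → ℝ)) × ((Fin k → ℝ) × (Fin k → ℝ)) =>
      busVoltage n P V p.1 := (contDiff_busVoltage n P V).comp contDiff_fst
  have hy : ContDiff ℝ m fun p : ((↥P → ℝ) × (Fin n → ℝ)) × ((Fin k → ℝ) × (Fin k → ℝ)) =>
      fun e => ((p.2.1 e : ℝ) : ℂ) + Complex.I * ((p.2.2 e : ℝ) : ℂ) :=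
    contDiff_pi.2 fun e => by fun_prop
  have hF := (contDiff_Fmat_mulVec (m := m) A).comp (hx.prodMk hy)
  refine (contDiff_pi.2 fun i => ?_).prodMk (contDiff_pi.2 fun i => ?_)
  · exact (Complex.contDiff_re.comp ((contDiff_apply ℝ ℂ i).comp hF)).sub contDiff_const
  · exact (Complex.contDiff_im.comp ((contDiff_apply ℝ ℂ (i : Fin n)).comp hF)).add contDiff_const

end Smoothness

/-- **Differentiability of power flow solutions with respect to admittance
parameters.** If `κ (s₀, w₀) = 0` and the partial Fréchet derivative of `κ` with respect to
the state at `(s₀, w₀)` is a continuous linear equivalence `J` (the power flow Jacobian is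
invertible, i.e. no static voltage collapse), then there are an open neighborhood `U` of
`w₀ = (g⁰, b⁰)` and a map `σ`, continuously differentiable on `U`, with `σ w₀ = s₀`,
`κ (σ w, w) = 0` on `U`, and `fderiv σ w₀ = -J⁻¹ ∘ ∂κ/∂(g,b) (s₀, w₀)`. -/
theorem powerflow_implicit_differentiation (n k : ℕ) (P : Finset (Fin n)) (V : Fin n → ℝ)
    (A : Matrix (Fin k) (Fin n) ℂ) (p0 : Fin n → ℝ) (q0 : ↥P → ℝ)
    (s0 : (↥P → ℝ) × (Fin n → ℝ)) (w0 : (Fin k → ℝ) × (Fin k → ℝ))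
    (h0 : kappa n k P V A p0 q0 s0 w0 = 0)
    (J : ((↥P → ℝ) × (Fin n → ℝ)) ≃L[ℝ] ((Fin n → ℝ) × (↥P → ℝ)))
    (hJ : fderiv ℝ (fun s => kappa n k P V A p0 q0 s w0) s0
      = (J : ((↥P → ℝ) × (Fin n → ℝ)) →L[ℝ] ((Fin n → ℝ) × (↥P → ℝ)))) :
    ∃ U : Set ((Fin k → ℝ) × (Fin k → ℝ)), IsOpen U ∧ w0 ∈ U ∧
      ∃ σ : (Fin k → ℝ) × (Fin k → ℝ) → (↥P → ℝ) × (Fin n → ℝ),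
        ContDiffOn ℝ 1 σ U ∧
        σ w0 = s0 ∧
        (∀ w ∈ U, kappa n k P V A p0 q0 (σ w) w = 0) ∧
        fderiv ℝ σ w0 =
          -((J.symm : ((Fin n → ℝ) × (↥P → ℝ)) →L[ℝ] ((↥P → ℝ) × (Fin n → ℝ))).comp
            (fderiv ℝ (fun w => kappa n k P V A p0 q0 s0 w) w0)) := by
  obtain ⟨U, hU, hw0, σ, hσ, hσw0, hσκ, hσ'⟩ :=
    (contDiff_kappa n k P V A p0 q0).contDiffAt.exists_implicitFunction_fst J hJ
  exact ⟨U, hU, hw0, σ, hσ, hσw0, fun w hw => (hσκ w hw).trans h0, hσ'⟩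
end
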